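/- The Hénon–Heiles type system with three degrees of freedom is quasi-biHamiltonian with integrating factor ρ = q3² and second function F = H3: the identity q3² · P0 ∇H1(x) = P1(x) ∇H3(x) holds for every x = (q1,q2,q3,p1,p2,p3) ∈ ℝ⁶. -/
import Mathlib


/- STATEMENT 3: The 3-dof Hénon–Heiles type system is quasi-biHamiltonian with
ρ = q3² and F = H3:  q3² · P0 ∇H1(x) = P1(x) ∇H3(x) for all x ∈ ℝ⁶. -/

noncomputable section

open Matrix

def pd (i : Fin 6) (f : (Fin 6 → ℝ) → ℝ) (x : Fin 6 → ℝ) : ℝ :=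
  fderiv ℝ f x (Pi.single i 1)

def grad (f : (Fin 6 → ℝ) → ℝ) (x : Fin 6 → ℝ) : Fin 6 → ℝ :=
  fun i => pd i f x

/-- the canonical matrix `P0 = [[0, I],[−I, 0]]`. -/
def P0 : Matrix (Fin 6) (Fin 6) ℝ :=
  !![0, 0, 0, 1, 0, 0;
     0, 0, 0, 0, 1, 0;
     0, 0, 0, 0, 0, 1;
     -1, 0, 0, 0, 0, 0;
     0, -1, 0, 0, 0, 0;
     0, 0, -1, 0, 0, 0]

/-- The matrix `P1 = [[0, A],[−Aᵀ, B]]` with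
`A = −[[q1,−1,0],[2q2,q1,q3],[q3,0,0]]`, `B = [[0,−p2,−p3],[p2,0,0],[p3,0,0]]`. -/
def P1 (x : Fin 6 → ℝ) : Matrix (Fin 6) (Fin 6) ℝ :=
  !![0, 0, 0, -(x 0), 1, 0;
     0, 0, 0, -(2 * x 1), -(x 0), -(x 2);
     0, 0, 0, -(x 2), 0, 0;
     x 0, 2 * x 1, x 2, 0, -(x 4), -(x 5);
     -1, x 0, 0, x 4, 0, 0;
     0, x 2, 0, x 5, 0, 0]

def H1 (x : Fin 6 → ℝ) : ℝ :=
  (1/2) * (2 * x 3 * x 4 + (x 5)^2) - (5/8) * (x 0)^4 + (5/2) * (x 0)^2 * x 1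
    + (1/2) * x 0 * (x 2)^2 - (1/2) * (x 1)^2

def H3 (x : Fin 6 → ℝ) : ℝ :=
  (1/2) * (x 5)^2 * (x 0)^2 + (x 5)^2 * x 1 - x 3 * x 5 * x 2
    - x 4 * x 5 * x 0 * x 2 + (1/2) * (x 4)^2 * (x 2)^2
    + (1/2) * (x 0)^3 * (x 2)^2 - x 0 * x 1 * (x 2)^2 - (1/8) * (x 2)^4

lemma hpow {f : (Fin 6 → ℝ) → ℝ} {f' : (Fin 6 → ℝ) →L[ℝ] ℝ} {x : Fin 6 → ℝ}
    (h : HasFDerivAt f f' x) (n : ℕ) :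
    HasFDerivAt (fun y => f y ^ n) (((n : ℝ) * f x ^ (n - 1)) • f') x :=
  (hasDerivAt_pow n (f x)).comp_hasFDerivAt x h

lemma vc5 {α : Type*} (a : α) (u : Fin 5 → α) : Matrix.vecCons a u 5 = u 4 := rfl
lemma vc4 {α : Type*} (a : α) (u : Fin 4 → α) : Matrix.vecCons a u 4 = u 3 := rfl
lemma vc3 {α : Type*} (a : α) (u : Fin 3 → α) : Matrix.vecCons a u 3 = u 2 := rfl
lemma vc2 {α : Type*} (a : α) (u : Fin 2 → α) : Matrix.vecCons a u 2 = u 1 := rfl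
lemma vc1 {α : Type*} (a : α) (u : Fin 1 → α) : Matrix.vecCons a u 1 = u 0 := rfl

lemma hxp (i : Fin 6) (x : Fin 6 → ℝ) :
    HasFDerivAt (fun f : Fin 6 → ℝ => f i)
      ((ContinuousLinearMap.proj i : (Fin 6 → ℝ) →L[ℝ] ℝ)) x :=
  hasFDerivAt_apply i x

lemma gradH1 (x : Fin 6 → ℝ) :
    grad H1 x = ![-(5/2)*(x 0)^3 + 5*(x 0)*(x 1) + (1/2)*(x 2)^2,
                  (5/2)*(x 0)^2 - x 1, x 0 * x 2, x 4, x 3, x 5] := by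
  have h : HasFDerivAt H1 _ x :=
    (((((((((hxp 3 x).const_mul (2:ℝ)).mul (hxp 4 x)).add (hpow (hxp 5 x) 2)).const_mul
        ((1:ℝ)/2)).sub ((hpow (hxp 0 x) 4).const_mul ((5:ℝ)/8))).add
        (((hpow (hxp 0 x) 2).const_mul ((5:ℝ)/2)).mul (hxp 1 x))).add
        (((hxp 0 x).const_mul ((1:ℝ)/2)).mul (hpow (hxp 2 x) 2))).sub
        ((hpow (hxp 1 x) 2).const_mul ((1:ℝ)/2)))
  have h' := h.fderiv
  funext i
  fin_cases i <;>
    simp [grad, pd, h', Pi.single_apply, vc1, vc2, vc3, vc4, vc5] <;> ring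

lemma gradH3 (x : Fin 6 → ℝ) :
    grad H3 x = ![(x 5)^2 * x 0 - x 4 * x 5 * x 2 + (3/2)*(x 0)^2*(x 2)^2 - x 1 * (x 2)^2,
                  (x 5)^2 - x 0 * (x 2)^2,
                  -(x 3)*(x 5) - x 4 * x 5 * x 0 + (x 4)^2 * x 2 + (x 0)^3 * x 2
                    - 2 * x 0 * x 1 * x 2 - (1/2)*(x 2)^3,
                  -(x 5) * x 2,
                  -(x 5) * x 0 * x 2 + x 4 * (x 2)^2,
                  x 5 * (x 0)^2 + 2 * x 5 * x 1 - x 3 * x 2 - x 4 * x 0 * x 2] := by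
  have h : HasFDerivAt H3 _ x :=
    ((((((((((hpow (hxp 5 x) 2).const_mul ((1:ℝ)/2)).mul (hpow (hxp 0 x) 2)).add
        ((hpow (hxp 5 x) 2).mul (hxp 1 x))).sub
        (((hxp 3 x).mul (hxp 5 x)).mul (hxp 2 x))).sub
        ((((hxp 4 x).mul (hxp 5 x)).mul (hxp 0 x)).mul (hxp 2 x))).add
        (((hpow (hxp 4 x) 2).const_mul ((1:ℝ)/2)).mul (hpow (hxp 2 x) 2))).add
        (((hpow (hxp 0 x) 3).const_mul ((1:ℝ)/2)).mul (hpow (hxp 2 x) 2))).sub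
        (((hxp 0 x).mul (hxp 1 x)).mul (hpow (hxp 2 x) 2))).sub
        ((hpow (hxp 2 x) 4).const_mul ((1:ℝ)/8)))
  have h' := h.fderiv
  funext i
  fin_cases i <;>
    simp [grad, pd, h', Pi.single_apply, vc1, vc2, vc3, vc4, vc5] <;> ring

theorem henon_heiles_3dof_quasi_biHamiltonian :
    ∀ x : Fin 6 → ℝ,
      (x 2)^2 • P0.mulVec (grad H1 x) = (P1 x).mulVec (grad H3 x) := by
  intro x
  rw [gradH1, gradH3]
  funext i
  fin_cases i <;>
    simp [P0, P1, Matrix.mulVec, dotProduct, Fin.sum_univ_six, vc1, vc2, vc3, vc4, vc5] <;> ring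

end
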